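/- Let G be a finite simple graph, let φ be a proper 5-coloring of G, and let v be a vertex of G of degree at most 4. For every sequence of m Kempe changes in G − v transforming φ restricted to V(G) − {v} into a proper 5-coloring ψ', there exists a sequence of at most 2m Kempe changes in G transforming φ into a proper 5-coloring ψ of G whose restriction to V(G) − {v} equals ψ'; moreover this sequence can be chosen so that every vertex other than v changes its color exactly as many times as in the given sequence in G − v, and v changes its color at most m times. -/

import Mathlib

/-!
A Kempe change of `G - v` in colors `a, b` is the restriction of a Kempe change of `G` unless
`v` has two neighbours in the `a/b` subgraph of `G`, through which it might merge two chains of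
`G - v`. In that case `v` itself is colored `a` or `b` and two of its at most four neighbours are
colored `a` or `b`, so one of the three other colors is missing around `v`. Recoloring `v` with it
is a Kempe change on the chain `{v}`, after which `v` lies on no `a/b` chain and the change lifts
without touching `v`. Each change of `G - v` thus costs at most two changes of `G`, and only one
of them recolors `v`.
-/

/-- `φ` is a proper `k`-coloring of `G`: adjacent vertices get different colors. -/
def IsProperColoring {V : Type*} (G : SimpleGraph V) (k : ℕ) (φ : V → Fin k) : Prop :=
  ∀ ⦃u v : V⦄, G.Adj u v → φ u ≠ φ v

/-- The spanning subgraph of `G` keeping only edges between vertices colored `a` or `b`: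
its connected components meeting the `a/b`-colored vertices are the Kempe chains. -/
def kempeSub {V : Type*} (G : SimpleGraph V) {k : ℕ} (φ : V → Fin k) (a b : Fin k) :
    SimpleGraph V where
  Adj x y := G.Adj x y ∧ (φ x = a ∨ φ x = b) ∧ (φ y = a ∨ φ y = b)
  symm := ⟨fun x y ⟨h, hx, hy⟩ => ⟨h.symm, hy, hx⟩⟩
  loopless := ⟨fun x h => G.loopless.irrefl x h.1⟩

/-- `ψ` is obtained from `φ` by a single Kempe change in the pair of colors `{a, b}`:
the colors `a` and `b` are swapped on the Kempe chain containing some vertex `v`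
colored `a` or `b`, and all other vertices keep their color. -/
def KempeStepAB {V : Type*} (G : SimpleGraph V) {k : ℕ} (a b : Fin k) (φ ψ : V → Fin k) :
    Prop :=
  a ≠ b ∧ ∃ v : V, (φ v = a ∨ φ v = b) ∧
    (∀ u : V, (kempeSub G φ a b).Reachable v u → ψ u = Equiv.swap a b (φ u)) ∧
    (∀ u : V, ¬ (kempeSub G φ a b).Reachable v u → ψ u = φ u)

/-- `ψ` is obtained from `φ` by a single Kempe change (in some pair of colors). -/
def KempeStep {V : Type*} (G : SimpleGraph V) (k : ℕ) (φ ψ : V → Fin k) : Prop :=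
  ∃ a b : Fin k, KempeStepAB G a b φ ψ

/-- The number of indices `i < m` at which the vertex `x` changes its color in the
sequence of colorings `σ 0, σ 1, …, σ m`. -/
def changeCount {W : Type*} {k : ℕ} (m : ℕ) (σ : ℕ → W → Fin k) (x : W) : ℕ :=
  ((Finset.range m).filter fun i => σ i x ≠ σ (i + 1) x).card

section KempeLift

open SimpleGraph

variable {V : Type*} {k : ℕ}

theorem SimpleGraph.Reachable.induce_ne_of_subsingleton_neighborSet {H : SimpleGraph V} {v : V}
    (hv : (H.neighborSet v).Subsingleton) {x y : V} (hx : x ≠ v) (hy : y ≠ v)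
    (h : H.Reachable x y) : (H.induce {z | z ≠ v}).Reachable ⟨x, hx⟩ ⟨y, hy⟩ := by
  obtain ⟨p, hp⟩ := h.exists_isPath
  exact ⟨p.induce _ fun z hz (hzv : z = v) =>
    hp.isTrail.not_mem_support_of_subsingleton_neighborSet hx.symm hy.symm hv (hzv ▸ hz)⟩

theorem SimpleGraph.reachable_induce_ne_iff {H : SimpleGraph V} {v : V}
    (hv : (H.neighborSet v).Subsingleton) (x y : ↥{z : V | z ≠ v}) :
    (H.induce {z | z ≠ v}).Reachable x y ↔ H.Reachable x y :=
  ⟨fun h => h.map (Embedding.induce _).toHom,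
    Reachable.induce_ne_of_subsingleton_neighborSet hv x.prop y.prop⟩

theorem SimpleGraph.eq_of_reachable_of_forall_not_adj {H : SimpleGraph V} {w u : V}
    (hw : ∀ u, ¬ H.Adj w u) (h : H.Reachable w u) : u = w := by
  obtain ⟨p⟩ := h
  cases p with
  | nil => rfl
  | cons hadj _ => exact absurd hadj (hw _)

theorem exists_forall_adj_ne_color (G : SimpleGraph V) {v : V}
    [Fintype (G.neighborSet v)] (hv : G.degree v < k) (φ : V → Fin k) {a b : Fin k}
    (hab : a ≠ b) {u₁ u₂ : V} (hu : u₁ ≠ u₂) (h₁ : G.Adj v u₁) (h₂ : G.Adj v u₂)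
    (hφ₁ : φ u₁ = a ∨ φ u₁ = b) (hφ₂ : φ u₂ = a ∨ φ u₂ = b) :
    ∃ c, c ≠ a ∧ c ≠ b ∧ ∀ u, G.Adj v u → φ u ≠ c := by
  classical
  set rest := ((G.neighborFinset v).erase u₁).erase u₂
  have hcard : (rest.image φ).card < ({a, b}ᶜ : Finset (Fin k)).card := by
    have : rest.card = G.degree v - 2 := by
      rw [Finset.card_erase_of_mem (by simp [hu.symm, h₂]), Finset.card_erase_of_mem (by simpa),
        card_neighborFinset_eq_degree]
      omega
    rw [Finset.card_compl, Fintype.card_fin, Finset.card_pair hab]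
    have : 2 ≤ G.degree v := by
      rw [← card_neighborFinset_eq_degree]
      exact Finset.one_lt_card.2 ⟨u₁, by simpa, u₂, by simpa, hu⟩
    exact Finset.card_image_le.trans_lt (by omega)
  obtain ⟨c, hc, hcrest⟩ := Finset.exists_mem_notMem_of_card_lt_card hcard
  simp only [Finset.mem_compl, Finset.mem_insert, Finset.mem_singleton, not_or] at hc
  refine ⟨c, hc.1, hc.2, fun u hu hφu => ?_⟩
  by_cases hu₁₂ : u = u₁ ∨ u = u₂
  · rcases hu₁₂ with rfl | rfl <;> grind
  · exact hcrest (Finset.mem_image.2 ⟨u, by simp_all [rest], hφu⟩)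

theorem kempeSub_induce (G : SimpleGraph V) (s : Set V) (φ : V → Fin k) (a b : Fin k) :
    kempeSub (G.induce s) (fun x => φ x.val) a b = (kempeSub G φ a b).induce s :=
  rfl

open Classical in
noncomputable def kempeSwap (G : SimpleGraph V) (φ : V → Fin k) (a b : Fin k) (w : V) :
    V → Fin k :=
  fun u => if (kempeSub G φ a b).Reachable w u then Equiv.swap a b (φ u) else φ u

section KempeSwap

variable {G : SimpleGraph V} {φ ψ : V → Fin k} {a b : Fin k}

theorem kempeStepAB_kempeSwap {w : V} (hab : a ≠ b) (hw : φ w = a ∨ φ w = b) :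
    KempeStepAB G a b φ (kempeSwap G φ a b w) :=
  ⟨hab, w, hw, fun _ hu => if_pos hu, fun _ hu => if_neg hu⟩

theorem KempeStepAB.exists_eq_kempeSwap (h : KempeStepAB G a b φ ψ) :
    ∃ w, (φ w = a ∨ φ w = b) ∧ ψ = kempeSwap G φ a b w := by
  obtain ⟨-, w, hw, hin, hout⟩ := h
  refine ⟨w, hw, funext fun u => ?_⟩
  unfold kempeSwap
  split_ifs with hu
  exacts [hin u hu, hout u hu]

theorem kempeSwap_apply_of_ne {w u : V} (ha : φ u ≠ a) (hb : φ u ≠ b) :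
    kempeSwap G φ a b w u = φ u := by
  unfold kempeSwap
  split_ifs
  exacts [Equiv.swap_apply_of_ne_of_ne ha hb, rfl]

theorem kempeSwap_induce_ne {v : V} (hv : ((kempeSub G φ a b).neighborSet v).Subsingleton)
    (w x : ↥{z : V | z ≠ v}) :
    kempeSwap (G.induce {z | z ≠ v}) (fun z => φ z.val) a b w x = kempeSwap G φ a b w x := by
  classical
  unfold kempeSwap
  exact if_congr (by rw [kempeSub_induce, reachable_induce_ne_iff hv]) rfl rfl

theorem kempeSwap_eq_update [DecidableEq V] {w : V} {c : Fin k}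
    (hw : ∀ u, G.Adj w u → φ u ≠ φ w ∧ φ u ≠ c) :
    kempeSwap G φ (φ w) c w = Function.update φ w c := by
  have hiso : ∀ u, ¬ (kempeSub G φ (φ w) c).Adj w u := fun u ⟨hadj, _, hu⟩ =>
    hu.elim (hw u hadj).1 (hw u hadj).2
  funext u
  unfold kempeSwap
  by_cases hu : u = w
  · subst hu
    simp
  · rw [if_neg fun h => hu (eq_of_reachable_of_forall_not_adj hiso h),
      Function.update_of_ne hu]

theorem KempeStep.isProperColoring (hφ : IsProperColoring G k φ) (h : KempeStep G k φ ψ) :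
    IsProperColoring G k ψ := by
  obtain ⟨a, b, hab⟩ := h
  obtain ⟨w, -, rfl⟩ := hab.exists_eq_kempeSwap
  have hborder : ∀ ⦃u u'⦄, G.Adj u u' → (kempeSub G φ a b).Reachable w u →
      ¬ (kempeSub G φ a b).Reachable w u' → Equiv.swap a b (φ u) ≠ φ u' := by
    intro u u' hadj hu hu'
    have hchain : ¬ ((φ u = a ∨ φ u = b) ∧ (φ u' = a ∨ φ u' = b)) := fun h =>
      hu' (hu.trans (Adj.reachable ⟨hadj, h⟩))
    have hne := hφ hadj
    rw [Equiv.swap_apply_def]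
    split_ifs <;> grind
  intro u u' hadj
  unfold kempeSwap
  split_ifs with hu hu' hu'
  · exact (Equiv.injective _).ne (hφ hadj)
  · exact hborder hadj hu hu'
  · exact (hborder hadj.symm hu' hu).symm
  · exact hφ hadj

end KempeSwap

theorem changeCount_succ {W : Type*} (n : ℕ) (σ : ℕ → W → Fin k) (x : W) :
    changeCount (n + 1) σ x = changeCount n σ x + if σ n x = σ (n + 1) x then 0 else 1 := by
  unfold changeCount
  rw [Finset.range_add_one, Finset.filter_insert]
  split_ifs with h
  · rw [Finset.card_insert_of_notMem (by simp)]
  · simp_all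
  · simp_all

theorem changeCount_congr {W : Type*} {n : ℕ} {σ τ : ℕ → W → Fin k} (h : ∀ j ≤ n, σ j = τ j)
    (x : W) : changeCount n σ x = changeCount n τ x := by
  unfold changeCount
  congr 1
  refine Finset.filter_congr fun i hi => ?_
  rw [Finset.mem_range] at hi
  rw [h i hi.le, h (i + 1) hi]

def KempeReachable (G : SimpleGraph V) (k n : ℕ) (φ ψ : V → Fin k) (c : V → ℕ) : Prop :=
  ∃ σ : ℕ → V → Fin k, σ 0 = φ ∧ σ n = ψ ∧ (∀ i < n, KempeStep G k (σ i) (σ (i + 1))) ∧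
    ∀ x, changeCount n σ x = c x

namespace KempeReachable

variable {G : SimpleGraph V} {n : ℕ} {φ χ ψ : V → Fin k} {c : V → ℕ}

theorem refl (G : SimpleGraph V) (φ : V → Fin k) : KempeReachable G k 0 φ φ 0 :=
  ⟨fun _ => φ, rfl, rfl, fun _ h => absurd h (Nat.not_lt_zero _), fun _ => rfl⟩

theorem snoc (h : KempeReachable G k n φ χ c) (hs : KempeStep G k χ ψ) :
    KempeReachable G k (n + 1) φ ψ fun x => c x + if χ x = ψ x then 0 else 1 := by
  obtain ⟨σ, hσ0, hσn, hsteps, hcount⟩ := h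
  have hprefix : ∀ j ≤ n, Function.update σ (n + 1) ψ j = σ j := fun j hj =>
    Function.update_of_ne (by omega) _ _
  refine ⟨Function.update σ (n + 1) ψ, by rw [hprefix 0 n.zero_le, hσ0],
    Function.update_self .., fun i hi => ?_, fun x => ?_⟩
  · rcases Nat.lt_succ_iff_lt_or_eq.1 hi with hi | rfl
    · rw [hprefix i hi.le, hprefix (i + 1) hi]
      exact hsteps i hi
    · rwa [hprefix i le_rfl, Function.update_self, hσn]
  · rw [changeCount_succ, changeCount_congr hprefix, hcount, hprefix n le_rfl, hσn,
      Function.update_self]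

theorem isProperColoring (h : KempeReachable G k n φ ψ c) (hφ : IsProperColoring G k φ) :
    IsProperColoring G k ψ := by
  obtain ⟨σ, hσ0, rfl, hsteps, -⟩ := h
  suffices ∀ i ≤ n, IsProperColoring G k (σ i) from this n le_rfl
  intro i hi
  induction i with
  | zero => rwa [hσ0]
  | succ i ih => exact (hsteps i hi).isProperColoring (ih (by omega))

end KempeReachable

section Lift

variable {G : SimpleGraph V} {v : V}

theorem KempeStepAB.exists_lift_of_subsingleton {ρ : V → Fin k} {τ' : ↥{x : V | x ≠ v} → Fin k}
    {a b : Fin k}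
    (hv : ((kempeSub G ρ a b).neighborSet v).Subsingleton)
    (h : KempeStepAB (G.induce {x | x ≠ v}) a b (fun x => ρ x.val) τ') :
    ∃ ψ, KempeStepAB G a b ρ ψ ∧ ∀ x : ↥{x : V | x ≠ v}, ψ x = τ' x := by
  obtain ⟨w, hw, rfl⟩ := h.exists_eq_kempeSwap
  exact ⟨kempeSwap G ρ a b w, kempeStepAB_kempeSwap h.1 hw,
    fun x => (kempeSwap_induce_ne hv w x).symm⟩

theorem KempeReachable.exists_lift_step [Fintype (G.neighborSet v)] (hv : G.degree v < k)
    {n : ℕ} {φ ρ : V → Fin k} {c : V → ℕ} {τ' : ↥{x : V | x ≠ v} → Fin k}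
    (hr : KempeReachable G k n φ ρ c) (hρ : IsProperColoring G k ρ)
    (h : KempeStep (G.induce {x | x ≠ v}) k (fun x => ρ x.val) τ') :
    ∃ n' ψ c', n' ≤ n + 2 ∧ KempeReachable G k n' φ ψ c' ∧
      (∀ x : ↥{x : V | x ≠ v}, ψ x = τ' x ∧ c' x = c x + if ρ x = τ' x then 0 else 1) ∧
      c' v ≤ c v + 1 := by
  classical
  obtain ⟨a, b, hAB⟩ := h
  by_cases hleaf : ((kempeSub G ρ a b).neighborSet v).Subsingleton
  · obtain ⟨ψ, hψ, hres⟩ := hAB.exists_lift_of_subsingleton hleaf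
    refine ⟨n + 1, ψ, _, by omega, hr.snoc ⟨a, b, hψ⟩, fun x => ⟨hres x, by rw [hres x]⟩, ?_⟩
    split_ifs <;> omega
  obtain ⟨u₁, ⟨h₁, hρv, hu₁⟩, u₂, ⟨h₂, -, hu₂⟩, hu⟩ := Set.not_subsingleton_iff.1 hleaf
  obtain ⟨c₀, hca, hcb, hfree⟩ :=
    exists_forall_adj_ne_color G hv ρ hAB.1 hu h₁ h₂ hu₁ hu₂
  have hrecolor : KempeStep G k ρ (Function.update ρ v c₀) := by
    refine ⟨ρ v, c₀, ?_⟩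
    rw [← kempeSwap_eq_update fun u hvu => ⟨(hρ hvu).symm, hfree u hvu⟩]
    exact kempeStepAB_kempeSwap (by grind) (Or.inl rfl)
  set ρ₁ := Function.update ρ v c₀
  have hρ₁v : ρ₁ v = c₀ := Function.update_self ..
  have hρ₁ : ∀ x : ↥{x : V | x ≠ v}, ρ₁ x = ρ x := fun x => Function.update_of_ne x.prop ..
  have hleaf₁ : ((kempeSub G ρ₁ a b).neighborSet v).Subsingleton := by
    rintro u ⟨-, hv₁, -⟩
    grind
  obtain ⟨ψ, hψ, hres⟩ := (funext hρ₁ ▸ hAB).exists_lift_of_subsingleton hleaf₁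
  have hψv : ψ v = c₀ := by
    obtain ⟨w, -, rfl⟩ := hψ.exists_eq_kempeSwap
    rw [kempeSwap_apply_of_ne] <;> grind
  refine ⟨n + 2, ψ, _, le_rfl, (hr.snoc hrecolor).snoc ⟨a, b, hψ⟩, fun x => ⟨hres x, ?_⟩, ?_⟩
  · simp [hρ₁ x, hres x]
  · simp only [hρ₁v, hψv, if_true, add_zero]
    split_ifs <;> omega

end Lift

theorem exists_kempeReachable_lift {G : SimpleGraph V} {v : V} [Fintype (G.neighborSet v)]
    (hv : G.degree v < k) {φ : V → Fin k} (hφ : IsProperColoring G k φ)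
    {σ' : ℕ → ↥{x : V | x ≠ v} → Fin k} (h0 : σ' 0 = fun x => φ x.val) :
    ∀ m, (∀ i < m, KempeStep (G.induce {x : V | x ≠ v}) k (σ' i) (σ' (i + 1))) →
      ∃ n ψ c, n ≤ 2 * m ∧ KempeReachable G k n φ ψ c ∧
        (∀ x : ↥{x : V | x ≠ v}, ψ x = σ' m x ∧ c x = changeCount m σ' x) ∧ c v ≤ m
  | 0, _ => ⟨0, φ, 0, le_rfl, .refl G φ, fun x => ⟨by rw [h0], rfl⟩, le_rfl⟩
  | m + 1, hstep => by
    obtain ⟨n, ρ, c, hn, hr, hres, hcv⟩ :=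
      exists_kempeReachable_lift hv hφ h0 m fun i hi => hstep i (by omega)
    have hρ : (fun x : ↥{x : V | x ≠ v} => ρ x) = σ' m := funext fun x => (hres x).1
    obtain ⟨n', ψ, c', hn', hr', hres', hcv'⟩ :=
      hr.exists_lift_step hv (hr.isProperColoring hφ) (hρ ▸ hstep m (by omega))
    refine ⟨n', ψ, c', by omega, hr', fun x => ⟨(hres' x).1, ?_⟩, by omega⟩
    rw [(hres' x).2, changeCount_succ, (hres x).1, (hres x).2]

end KempeLift

theorem lift_sequence_low_degree_vertex_general {V : Type*} [Fintype V]
    (G : SimpleGraph V) [DecidableRel G.Adj] (v : V) (hv : G.degree v ≤ 4)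
    (φ : V → Fin 5) (hφ : IsProperColoring G 5 φ)
    (m : ℕ) (σ' : ℕ → ↥{x : V | x ≠ v} → Fin 5)
    (h0 : σ' 0 = fun x => φ x.val)
    (hstep : ∀ i < m, KempeStep (G.induce {x : V | x ≠ v}) 5 (σ' i) (σ' (i + 1))) :
    ∃ (m' : ℕ) (σ : ℕ → V → Fin 5),
      m' ≤ 2 * m ∧
      σ 0 = φ ∧
      IsProperColoring G 5 (σ m') ∧
      (∀ x : ↥{x : V | x ≠ v}, σ m' x.val = σ' m x) ∧
      (∀ i < m', KempeStep G 5 (σ i) (σ (i + 1))) ∧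
      (∀ x : ↥{x : V | x ≠ v}, changeCount m' σ x.val = changeCount m σ' x) ∧
      changeCount m' σ v ≤ m := by
  obtain ⟨n, ψ, c, hn, hr, hres, hcv⟩ :=
    exists_kempeReachable_lift (by omega) hφ h0 m hstep
  have hψ := hr.isProperColoring hφ
  obtain ⟨σ, hσ0, rfl, hsteps, hcount⟩ := hr
  exact ⟨n, σ, hn, hσ0, hψ, fun x => (hres x).1, hsteps, fun x => (hcount x).trans (hres x).2,
    (hcount v).trans_le hcv⟩

/-- If `v` has degree at most `4` in `G` and `φ` is a proper
`5`-coloring of `G`, then every sequence of `m` Kempe changes in `G - v` starting from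
the restriction of `φ` lifts to a sequence of at most `2m` Kempe changes in `G` starting
from `φ`, ending at a proper `5`-coloring restricting to the final coloring in `G - v`,
in which every vertex other than `v` changes its color exactly as many times as in the
given sequence and `v` changes its color at most `m` times. -/
theorem lift_sequence_low_degree_vertex {V : Type*} [Fintype V] [DecidableEq V]
    (G : SimpleGraph V) [DecidableRel G.Adj] (v : V) (hv : G.degree v ≤ 4)
    (φ : V → Fin 5) (hφ : IsProperColoring G 5 φ)
    (m : ℕ) (σ' : ℕ → ↥{x : V | x ≠ v} → Fin 5)
    (h0 : σ' 0 = fun x => φ x.val)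
    (hstep : ∀ i < m, KempeStep (G.induce {x : V | x ≠ v}) 5 (σ' i) (σ' (i + 1))) :
    ∃ (m' : ℕ) (σ : ℕ → V → Fin 5),
      m' ≤ 2 * m ∧
      σ 0 = φ ∧
      IsProperColoring G 5 (σ m') ∧
      (∀ x : ↥{x : V | x ≠ v}, σ m' x.val = σ' m x) ∧
      (∀ i < m', KempeStep G 5 (σ i) (σ (i + 1))) ∧
      (∀ x : ↥{x : V | x ≠ v}, changeCount m' σ x.val = changeCount m σ' x) ∧
      changeCount m' σ v ≤ m :=
  lift_sequence_low_degree_vertex_general G v hv φ hφ m σ' h0 hstep
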